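/- Substitution preserves sequential typing: if Γ ⊢ M : σ and Γ, x:σ ⊢ N : τ then Γ ⊢ {M/x}N : τ. -/

import Mathlib

/-- Terms of the sequential λ-calculus in de Bruijn representation
(so terms are automatically identified up to α-equivalence):
nil `*`, variable prefix `x.M`, push/application `[N].M`,
and pop/abstraction `<x>.M`. -/
inductive STm : Type
  | star : STm
  | var  : Nat → STm → STm
  | push : STm → STm → STm
  | pop  : STm → STm

namespace STm

/-- Lifting of a renaming under a binder. -/
def liftF (f : Nat → Nat) : Nat → Nat
  | 0 => 0
  | n+1 => f n + 1

/-- Renaming of de Bruijn indices. -/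
def rename (f : Nat → Nat) : STm → STm
  | star => star
  | var n M => var (f n) (rename f M)
  | push N M => push (rename f N) (rename f M)
  | pop M => pop (rename (liftF f) M)

/-- Capture-avoiding composition `N ; M`. -/
def comp : STm → STm → STm
  | star, P => P
  | var n N, P => var n (comp N P)
  | push Q N, P => push Q (comp N P)
  | pop N, P => pop (comp N (rename Nat.succ P))

/-- Lifting of a substitution under a binder. -/
def liftS (σ : Nat → STm) : Nat → STm
  | 0 => var 0 star
  | n+1 => rename Nat.succ (σ n)

/-- Capture-avoiding simultaneous substitution; note
`{N/x}(x.M) = N ; {N/x}M`. -/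
def subst (σ : Nat → STm) : STm → STm
  | star => star
  | var n M => comp (σ n) (subst σ M)
  | push N M => push (subst σ N) (subst σ M)
  | pop M => pop (subst (liftS σ) M)

/-- Capture-avoiding substitution `{N/x}M` of `N` for the variable bound
immediately outside `M`. -/
def subst1 (N : STm) : STm → STm :=
  subst (fun n => match n with | 0 => N | n+1 => var n star)

end STm

/-- Machine states: a stack of terms (written bottom-first, so the top
element is the last element of the list) together with a term. -/
abbrev SState := List STm × STm

/-- The transitions of the sequential stack machine:
`(S, [N].M) → (S·N, M)` and `(S·N, <x>.M) → (S, {N/x}M)`. -/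
inductive SMStep : SState → SState → Prop
  | push (S : List STm) (N M : STm) : SMStep (S, .push N M) (S ++ [N], M)
  | pop (S : List STm) (N M : STm) : SMStep (S ++ [N], .pop M) (S, STm.subst1 N M)

/-- A run of the sequential machine: a finite sequence of transitions. -/
def SRun : SState → SState → Prop := Relation.ReflTransGen SMStep

/-- Sequential types `ρ_n…ρ_1 ⟹ τ_1…τ_m`: an implication between two
finite vectors of sequential types. The first list is the input vector
as written (i.e. `arr (rev ρ⃗) τ⃗` represents `rev(ρ⃗) ⟹ τ⃗`). -/
inductive STy : Type
  | arr : List STy → List STy → STy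

/-- Typing judgments `Γ ⊢ M : τ` of the sequential λ-calculus, with the
context `Γ` a finite map from (de Bruijn) variables to types, given as a
list. -/
inductive Typing : List STy → STm → STy → Prop
  | star (Γ : List STy) (τs : List STy) :
      Typing Γ .star (.arr τs.reverse τs)
  | var (Γ : List STy) (n : Nat) (M : STm) (ρs σs τs υs : List STy) :
      Γ[n]? = some (.arr ρs.reverse σs) →
      Typing Γ M (.arr (σs.reverse ++ τs.reverse) υs) →
      Typing Γ (.var n M) (.arr (ρs.reverse ++ τs.reverse) υs)
  | abs (Γ : List STy) (M : STm) (ρ : STy) (σs τs : List STy) :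
      Typing (ρ :: Γ) M (.arr σs.reverse τs) →
      Typing Γ (.pop M) (.arr (ρ :: σs.reverse) τs)
  | app (Γ : List STy) (N M : STm) (ρ : STy) (σs τs : List STy) :
      Typing Γ N ρ →
      Typing Γ M (.arr (ρ :: σs.reverse) τs) →
      Typing Γ (.push N M) (.arr σs.reverse τs)

/-!
Typing is stable under renamings that respect the context, and a composition `N ; P` is typed
by plugging the output vector of `N` into the input of `P` (the vectors are reversed because
`P` pops what `N` pushed, last first). Substitution is then proved for simultaneous
substitutions by induction on the typing derivation: the variable case `{σ}(x.M) = σ(x) ; {σ}M`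
is exactly the composition rule, and under a binder the substitution is lifted by renaming.
-/

namespace Typing

variable {Γ Δ : List STy} {M N P : STm}

/- The typing rules with the reversed vectors absorbed into arbitrary lists. -/

theorem var' {n : Nat} {a b c υs : List STy} (hn : Γ[n]? = some (.arr a b))
    (hM : Typing Γ M (.arr (b.reverse ++ c) υs)) :
    Typing Γ (.var n M) (.arr (a ++ c) υs) := by
  simpa using
    Typing.var Γ n M a.reverse b c.reverse υs (by simpa using hn) (by simpa using hM)

theorem abs' {ρ : STy} {b τs : List STy} (hM : Typing (ρ :: Γ) M (.arr b τs)) :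
    Typing Γ (.pop M) (.arr (ρ :: b) τs) := by
  simpa using Typing.abs Γ M ρ b.reverse τs (by simpa using hM)

theorem app' {ρ : STy} {b τs : List STy} (hN : Typing Γ N ρ)
    (hM : Typing Γ M (.arr (ρ :: b) τs)) :
    Typing Γ (.push N M) (.arr b τs) := by
  simpa using Typing.app Γ N M ρ b.reverse τs hN (by simpa using hM)

theorem var_star {n : Nat} {ρ : STy} (hn : Γ[n]? = some ρ) : Typing Γ (.var n .star) ρ := by
  obtain ⟨a, b⟩ := ρ
  simpa using var' (c := []) hn (by simpa using Typing.star Γ b)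

theorem rename {τ : STy} {f : Nat → Nat} (hM : Typing Γ M τ)
    (hf : ∀ n ρ, Γ[n]? = some ρ → Δ[f n]? = some ρ) :
    Typing Δ (M.rename f) τ := by
  induction hM generalizing Δ f with
  | star _ τs => exact Typing.star Δ τs
  | var _ n _ ρs σs τs υs hn _ ih =>
      exact Typing.var Δ (f n) _ ρs σs τs υs (hf _ _ hn) (ih hf)
  | abs _ _ ρ σs τs _ ih =>
      refine Typing.abs Δ _ ρ σs τs (ih ?_)
      rintro (_ | n) ρ' hn
      exacts [hn, hf n ρ' hn]
  | app _ _ _ ρ σs τs _ _ ihN ihM => exact Typing.app Δ _ _ ρ σs τs (ihN hf) (ihM hf)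

theorem rename_succ {ρ τ : STy} (hM : Typing Γ M τ) :
    Typing (ρ :: Γ) (M.rename Nat.succ) τ :=
  rename hM fun _ _ hn => hn

theorem comp {a b c υs : List STy} (hN : Typing Γ N (.arr a b))
    (hP : Typing Γ P (.arr (b.reverse ++ c) υs)) :
    Typing Γ (N.comp P) (.arr (a ++ c) υs) := by
  generalize hτ : STy.arr a b = τ at hN
  induction hN generalizing a b P c with
  | star =>
      cases hτ
      simpa [STm.comp] using hP
  | var _ _ _ ρs σs τs _ hn _ ih =>
      cases hτ
      have hM := ih (by simpa using hP) rfl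
      simpa [STm.comp] using var' (c := τs.reverse ++ c) hn (by simpa using hM)
  | abs _ _ _ _ _ _ ih =>
      cases hτ
      simpa [STm.comp] using abs' (ih (rename_succ hP) rfl)
  | app _ _ _ _ σs _ hQ _ _ ih =>
      cases hτ
      simpa [STm.comp] using app' (b := σs.reverse ++ c) hQ (by simpa using ih hP rfl)

end Typing

def SubstTyping (Γ : List STy) (σ : Nat → STm) (Δ : List STy) : Prop :=
  ∀ n ρ, Δ[n]? = some ρ → Typing Γ (σ n) ρ

namespace SubstTyping

variable {Γ Δ : List STy} {σ : Nat → STm}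

theorem liftS {ρ : STy} (hσ : SubstTyping Γ σ Δ) :
    SubstTyping (ρ :: Γ) (STm.liftS σ) (ρ :: Δ)
  | 0, _, h => Typing.var_star h
  | n + 1, ρ', h => Typing.rename_succ (hσ n ρ' h)

theorem cons {M : STm} {ρ : STy} (hM : Typing Γ M ρ) :
    SubstTyping Γ (fun n => match n with | 0 => M | n + 1 => .var n .star) (ρ :: Γ)
  | 0, _, h => by cases h; exact hM
  | n + 1, _, h => Typing.var_star h

end SubstTyping

theorem Typing.subst {Γ Δ : List STy} {N : STm} {τ : STy} {σ : Nat → STm}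
    (hN : Typing Δ N τ) (hσ : SubstTyping Γ σ Δ) : Typing Γ (N.subst σ) τ := by
  induction hN generalizing Γ σ with
  | star _ τs => exact Typing.star Γ τs
  | var _ n _ _ _ _ _ hn _ ih => exact comp (hσ n _ hn) (by simpa using ih hσ)
  | abs _ _ ρ σs τs _ ih => exact Typing.abs Γ _ ρ σs τs (ih hσ.liftS)
  | app _ _ _ ρ σs τs _ _ ihN ihM => exact Typing.app Γ _ _ ρ σs τs (ihN hσ) (ihM hσ)

/-- Substitution preserves typing: if `Γ ⊢ M : σ` and `Γ, x:σ ⊢ N : τ`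
then `Γ ⊢ {M/x}N : τ`. -/
theorem seq_substitution (Γ : List STy) (M N : STm) (σ τ : STy)
    (hM : Typing Γ M σ) (hN : Typing (σ :: Γ) N τ) :
    Typing Γ (STm.subst1 M N) τ :=
  hN.subst (SubstTyping.cons hM)
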